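/- Let d ≥ 1 and let z', z'' ∈ {•,+,−}^d be such that, for every k, either z'_k = z''_k ∈ {+,−}, or (z'_k, z''_k) = (•, −), or (z'_k, z''_k) = (+, •). Define z ∈ {•,+,−}^d by z_k = • if z'_k = • or z''_k = •, and z_k = z'_k otherwise. Then for every 0 < ε < 1 the intersection P∨_{z'} ∩ P̃∨_{z''}(ε) is nonempty, and it converges to the dual cell P∨_{z} in Hausdorff distance as ε → 0⁺. -/

import Mathlib

/-- The three possible entries of a cell label of the hypercube:
`dot` = `•`, `pls` = `+`, `mns` = `−`. -/
inductive Sgn : Type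
  | dot : Sgn
  | pls : Sgn
  | mns : Sgn
  deriving DecidableEq

instance : Fintype Sgn :=
  ⟨{Sgn.dot, Sgn.pls, Sgn.mns}, fun x => by cases x <;> simp⟩

/-- The dual cell `P∨_z ⊆ [−1,1]^d` of the hypercube cell labeled `z ∈ {•,+,−}^d`:
`x_k = 0` if `z_k = •`, `x_k ≥ 0` if `z_k = +`, and `x_k ≤ 0` if `z_k = −`. -/
def dualCell {d : ℕ} (z : Fin d → Sgn) : Set (EuclideanSpace ℝ (Fin d)) :=
  {x | (∀ k, x k ∈ Set.Icc (-1 : ℝ) 1) ∧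
    ∀ k, (z k = Sgn.dot → x k = 0) ∧ (z k = Sgn.pls → 0 ≤ x k) ∧ (z k = Sgn.mns → x k ≤ 0)}

/-- The shifted dual cell `P̃∨_z(ε) ⊆ [−1,1]^d`, obtained by translating the defining
constraints of `P∨_z` by `ε` in every coordinate (shifting along `(1,…,1)` by `ε`):
`x_k = ε` if `z_k = •`, `x_k ≥ ε` if `z_k = +`, and `x_k ≤ ε` if `z_k = −`. -/
def shiftedDualCell {d : ℕ} (z : Fin d → Sgn) (ε : ℝ) : Set (EuclideanSpace ℝ (Fin d)) :=
  {x | (∀ k, x k ∈ Set.Icc (-1 : ℝ) 1) ∧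
    ∀ k, (z k = Sgn.dot → x k = ε) ∧ (z k = Sgn.pls → ε ≤ x k) ∧ (z k = Sgn.mns → x k ≤ ε)}

open Filter

/-!
Both sets are products of intervals, so it suffices to compare them coordinate by coordinate.
The admissible pairs `(z'_k, z''_k)` give, in coordinate `k`, the intervals `[ε, 1]`, `[-1, 0]`,
`{0}` and `{ε}`, against `[0, 1]`, `[-1, 0]`, `{0}` and `{0}` for `z_k`; each point of one is
within `ε` of the other, hence the Hausdorff distance is at most `√d ε`.
-/

open Set Metric

section PiLp

variable {ι : Type*} [Fintype ι] {β : ι → Type*} [∀ i, SeminormedAddCommGroup (β i)] {r : ℝ}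

theorem PiLp.dist_le_sqrt_card_mul (hr : 0 ≤ r) {x y : PiLp 2 β} (h : ∀ i, dist (x i) (y i) ≤ r) :
    dist x y ≤ √(Fintype.card ι) * r := by
  calc dist x y = √(∑ i, dist (x i) (y i) ^ 2) := PiLp.dist_eq_of_L2 x y
    _ ≤ √(∑ _ : ι, r ^ 2) := by gcongr with i; exact h i
    _ = √(Fintype.card ι) * r := by
      rw [Finset.sum_const, Finset.card_univ, nsmul_eq_mul, Real.sqrt_mul (Nat.cast_nonneg _),
        Real.sqrt_sq hr]

theorem PiLp.exists_mem_pi_dist_le (hr : 0 ≤ r) {A B : ∀ i, Set (β i)}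
    (hAB : ∀ i, ∀ a ∈ A i, ∃ b ∈ B i, dist a b ≤ r) {x : PiLp 2 β} (hx : ∀ i, x i ∈ A i) :
    ∃ y : PiLp 2 β, (∀ i, y i ∈ B i) ∧ dist x y ≤ √(Fintype.card ι) * r := by
  choose y hyB hy using fun i => hAB i (x i) (hx i)
  exact ⟨WithLp.toLp 2 y, hyB, PiLp.dist_le_sqrt_card_mul hr hy⟩

theorem PiLp.hausdorffDist_pi_le (hr : 0 ≤ r) {A B : ∀ i, Set (β i)}
    (hAB : ∀ i, ∀ a ∈ A i, ∃ b ∈ B i, dist a b ≤ r)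
    (hBA : ∀ i, ∀ b ∈ B i, ∃ a ∈ A i, dist b a ≤ r) :
    hausdorffDist {x : PiLp 2 β | ∀ i, x i ∈ A i} {x | ∀ i, x i ∈ B i} ≤
      √(Fintype.card ι) * r :=
  hausdorffDist_le_of_mem_dist (by positivity) (fun _ hx => PiLp.exists_mem_pi_dist_le hr hAB hx)
    (fun _ hx => PiLp.exists_mem_pi_dist_le hr hBA hx)

end PiLp

namespace Sgn

def ray : Sgn → ℝ → Set ℝ
  | dot, c => {c}
  | pls, c => Ici c
  | mns, c => Iic c

theorem mem_ray_iff {s : Sgn} {c t : ℝ} :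
    t ∈ s.ray c ↔ (s = dot → t = c) ∧ (s = pls → c ≤ t) ∧ (s = mns → t ≤ c) := by
  cases s <;> simp [ray]

def Compatible (a b : Sgn) : Prop :=
  (a = b ∧ a ≠ dot) ∨ (a = dot ∧ b = mns) ∨ (a = pls ∧ b = dot)

def merge (a b : Sgn) : Sgn :=
  if a = dot ∨ b = dot then dot else a

variable {a b : Sgn} {ε : ℝ}

theorem Compatible.exists_dist_le_of_mem (hab : Compatible a b) (hε : 0 ≤ ε) {t : ℝ}
    (ht : t ∈ (Icc (-1) 1 ∩ a.ray 0) ∩ (Icc (-1) 1 ∩ b.ray ε)) :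
    ∃ u ∈ Icc (-1) 1 ∩ (merge a b).ray 0, dist t u ≤ ε := by
  rcases hab with ⟨rfl, ha⟩ | ⟨rfl, rfl⟩ | ⟨rfl, rfl⟩
  · cases a
    · exact absurd rfl ha
    · exact ⟨t - ε, by grind [ray, merge, Real.dist_eq, abs_le]⟩
    · exact ⟨t, by grind [ray, merge, Real.dist_eq, abs_le]⟩
  · exact ⟨0, by grind [ray, merge, Real.dist_eq, abs_le]⟩
  · exact ⟨0, by grind [ray, merge, Real.dist_eq, abs_le]⟩

theorem Compatible.exists_mem_dist_le (hab : Compatible a b) (hε : 0 ≤ ε) (hε₁ : ε ≤ 1) {u : ℝ}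
    (hu : u ∈ Icc (-1) 1 ∩ (merge a b).ray 0) :
    ∃ t ∈ (Icc (-1) 1 ∩ a.ray 0) ∩ (Icc (-1) 1 ∩ b.ray ε), dist u t ≤ ε := by
  rcases hab with ⟨rfl, ha⟩ | ⟨rfl, rfl⟩ | ⟨rfl, rfl⟩
  · cases a
    · exact absurd rfl ha
    · exact ⟨max u ε, by grind [ray, merge, Real.dist_eq, abs_le]⟩
    · exact ⟨u, by grind [ray, merge, Real.dist_eq, abs_le]⟩
  · exact ⟨0, by grind [ray, merge, Real.dist_eq, abs_le]⟩
  · exact ⟨ε, by grind [ray, merge, Real.dist_eq, abs_le]⟩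

end Sgn

theorem shiftedDualCell_eq {d : ℕ} (z : Fin d → Sgn) (ε : ℝ) :
    shiftedDualCell z ε = {x | ∀ k, x k ∈ Icc (-1) 1 ∩ (z k).ray ε} := by
  ext x
  simp [shiftedDualCell, Sgn.mem_ray_iff, forall_and]

theorem dualCell_eq {d : ℕ} (z : Fin d → Sgn) :
    dualCell z = {x | ∀ k, x k ∈ Icc (-1) 1 ∩ (z k).ray 0} :=
  shiftedDualCell_eq z 0

theorem dualCell_inter_shiftedDualCell {d : ℕ} (z' z'' : Fin d → Sgn) (ε : ℝ) :
    dualCell z' ∩ shiftedDualCell z'' ε =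
      {x | ∀ k, x k ∈ (Icc (-1) 1 ∩ (z' k).ray 0) ∩ (Icc (-1) 1 ∩ (z'' k).ray ε)} := by
  rw [dualCell_eq, shiftedDualCell_eq]
  ext x
  simp only [mem_inter_iff, mem_ofPred_eq, forall_and]

theorem dualCell_shifted_limit (d : ℕ) (z' z'' : Fin d → Sgn)
    (h : ∀ k, (z' k = z'' k ∧ z' k ≠ Sgn.dot) ∨ (z' k = Sgn.dot ∧ z'' k = Sgn.mns) ∨
      (z' k = Sgn.pls ∧ z'' k = Sgn.dot)) :
    (∀ ε : ℝ, 0 < ε → ε < 1 → (dualCell z' ∩ shiftedDualCell z'' ε).Nonempty) ∧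
    Tendsto
      (fun ε : ℝ => Metric.hausdorffDist (dualCell z' ∩ shiftedDualCell z'' ε)
        (dualCell (fun k => if z' k = Sgn.dot ∨ z'' k = Sgn.dot then Sgn.dot else z' k)))
      (nhdsWithin 0 (Set.Ioi 0)) (nhds 0) := by
  have hnear : ∀ ε : ℝ, 0 < ε → ε < 1 → hausdorffDist (dualCell z' ∩ shiftedDualCell z'' ε)
      (dualCell fun k => Sgn.merge (z' k) (z'' k)) ≤ √d * ε := by
    intro ε hε hε₁
    rw [dualCell_inter_shiftedDualCell, dualCell_eq]
    simpa only [Fintype.card_fin] using PiLp.hausdorffDist_pi_le hε.le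
      (fun k _ => Sgn.Compatible.exists_dist_le_of_mem (h k) hε.le)
      (fun k _ => Sgn.Compatible.exists_mem_dist_le (h k) hε.le hε₁.le)
  refine ⟨fun ε hε hε₁ => ?_, ?_⟩
  · have h0 : ∀ k, (0 : EuclideanSpace ℝ (Fin d)) k ∈
        Icc (-1) 1 ∩ (Sgn.merge (z' k) (z'' k)).ray 0 := by
      simp [Sgn.mem_ray_iff]
    obtain ⟨x, hx, -⟩ := PiLp.exists_mem_pi_dist_le hε.le
      (fun k _ => Sgn.Compatible.exists_mem_dist_le (h k) hε.le hε₁.le) h0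
    exact ⟨x, by rwa [dualCell_inter_shiftedDualCell]⟩
  · have hlin : Tendsto (fun ε : ℝ => √d * ε) (nhdsWithin 0 (Ioi 0)) (nhds 0) := by
      simpa using (tendsto_id.const_mul (√d)).mono_left (nhdsWithin_le_nhds (a := (0 : ℝ)))
    refine squeeze_zero' (Eventually.of_forall fun _ => hausdorffDist_nonneg) ?_ hlin
    filter_upwards [Ioo_mem_nhdsGT (zero_lt_one' ℝ)] with ε hε
    exact hnear ε hε.1 hε.2
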